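/- arXiv:2111.08636 — 2 statements merged into one kernel-verified Lean document; each statement's English description precedes it below -/
import Mathlib

section
/- Let M ≥ 2 and 0 ≤ β < 1/M. Define a := (2/π)·arcsin( β / (1 - (M-1)β) ). Then C₂ := (1 + (M-1)a)·β - a ≥ 0, with equality if and only if β = 0. -/
theorem homogeneous_C2_nonneg (M : ℕ) (hM : 2 ≤ M) (β : ℝ)
    (hβ0 : 0 ≤ β) (hβ : β < 1 / (M:ℝ)) :
    0 ≤ (1 + ((M:ℝ) - 1) * (2 / Real.pi * Real.arcsin (β / (1 - ((M:ℝ) - 1) * β)))) * β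
        - 2 / Real.pi * Real.arcsin (β / (1 - ((M:ℝ) - 1) * β)) ∧
    ((1 + ((M:ℝ) - 1) * (2 / Real.pi * Real.arcsin (β / (1 - ((M:ℝ) - 1) * β)))) * β
        - 2 / Real.pi * Real.arcsin (β / (1 - ((M:ℝ) - 1) * β)) = 0 ↔ β = 0) := by
  have hM2 : (2:ℝ) ≤ (M:ℝ) := by exact_mod_cast hM
  have hMpos : (0:ℝ) < (M:ℝ) := by linarith
  have hMβ : (M:ℝ) * β < 1 := by
    have := (lt_div_iff₀ hMpos).mp hβ
    linarith
  have hden : 0 < 1 - ((M:ℝ) - 1) * β := by nlinarith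
  set x : ℝ := β / (1 - ((M:ℝ) - 1) * β) with hxdef
  have hx0 : 0 ≤ x := div_nonneg hβ0 hden.le
  have hx1 : x < 1 := by
    rw [hxdef, div_lt_one hden]; nlinarith
  have hxβ : x * (1 - ((M:ℝ) - 1) * β) = β := div_mul_cancel₀ _ hden.ne'
  set t : ℝ := Real.arcsin x with htdef
  have ht0 : 0 ≤ t := Real.arcsin_nonneg.mpr hx0
  have htlt : t < Real.pi / 2 := Real.arcsin_lt_pi_div_two.mpr hx1
  have hsin : Real.sin t = x := Real.sin_arcsin (by linarith) hx1.le
  have hle : 2 / Real.pi * t ≤ x := by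
    have := Real.mul_le_sin ht0 htlt.le
    rwa [hsin] at this
  have key : 2 / Real.pi * t * (1 - ((M:ℝ) - 1) * β) ≤ β := by
    calc 2 / Real.pi * t * (1 - ((M:ℝ) - 1) * β) ≤ x * (1 - ((M:ℝ) - 1) * β) :=
          mul_le_mul_of_nonneg_right hle hden.le
      _ = β := hxβ
  constructor
  · nlinarith [key]
  · constructor
    · intro h
      by_contra hb
      have hβpos : 0 < β := lt_of_le_of_ne hβ0 (Ne.symm hb)
      have hxpos : 0 < x := div_pos hβpos hden
      have htpos : 0 < t := Real.arcsin_pos.mpr hxpos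
      have hlt : 2 / Real.pi * t < x := by
        have := Real.mul_lt_sin htpos htlt
        rwa [hsin] at this
      have : 2 / Real.pi * t * (1 - ((M:ℝ) - 1) * β) < β := by
        calc 2 / Real.pi * t * (1 - ((M:ℝ) - 1) * β) < x * (1 - ((M:ℝ) - 1) * β) :=
              mul_lt_mul_of_pos_right hlt hden
          _ = β := hxβ
      nlinarith
    · intro h
      subst h
      have : t = 0 := by simp [htdef, hxdef]
      rw [this]; ring
end

section
/- Let (X, Y) be a bivariate centred Gaussian vector with Var(X) = Var(Y) = 1 and correlation ρ ∈ (-1, 1). Then P(X > 0 and Y > 0) = 1/4 + (1/(2π))·arcsin(ρ). -/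
/-!
Write `ρ = sin φ` with `|φ| < π / 2`. The linear map `(x, z) ↦ (x, x sin φ + z cos φ)` has
determinant `cos φ` and pulls the correlated density back to the standard Gaussian density, so the
probability is the standard Gaussian mass of the preimage of the quadrant. That preimage is the
sector of polar angles `(-φ, π / 2)`, and by rotation invariance a sector of opening `α` carries
mass `α / (2π)`. Hence the probability is `(π / 2 + φ) / (2π) = 1 / 4 + arcsin ρ / (2π)`.
-/

open MeasureTheory Real Set

theorem setLIntegral_comp_linearMap {E : Type*} [NormedAddCommGroup E] [NormedSpace ℝ E]
    [MeasurableSpace E] [BorelSpace E] [FiniteDimensional ℝ E] (μ : Measure E)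
    [μ.IsAddHaarMeasure] {T : E →ₗ[ℝ] E} (hT : LinearMap.det T ≠ 0) {s : Set E}
    (hs : MeasurableSet s) {f : E → ENNReal} (hf : Measurable f) :
    ∫⁻ x in T ⁻¹' s, f (T x) ∂μ = ENNReal.ofReal |(LinearMap.det T)⁻¹| * ∫⁻ y in s, f y ∂μ := by
  rw [← setLIntegral_map hs hf T.continuous_of_finiteDimensional.measurable,
    Measure.map_linearMap_addHaar_eq_smul_addHaar μ hT, Measure.restrict_smul,
    lintegral_smul_measure, smul_eq_mul]

theorem lintegral_Ioi_mul_exp_neg_sq_div_two :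
    ∫⁻ r in Ioi (0 : ℝ), ENNReal.ofReal (r * exp (-r ^ 2 / 2)) = 1 := by
  have h := integral_mul_cexp_neg_mul_sq (b := (1 / 2 : ℂ)) (by norm_num)
  have hreal : ∫ r in Ioi (0 : ℝ), r * exp (-r ^ 2 / 2) = 1 := by
    apply Complex.ofReal_injective
    rw [← integral_complex_ofReal]
    convert h using 1
    · push_cast; ring_nf
    · norm_num
  rw [← ofReal_integral_eq_lintegral_ofReal, hreal, ENNReal.ofReal_one]
  · refine (integrable_mul_exp_neg_mul_sq (by norm_num : (0 : ℝ) < 1 / 2)).integrableOn.congr_fun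
      (fun r _ ↦ ?_) measurableSet_Ioi
    ring_nf
  · filter_upwards [ae_restrict_mem measurableSet_Ioi] with r (hr : 0 < r)
    positivity

theorem setLIntegral_radial_eq_of_polarCoord {S : Set (ℝ × ℝ)} (hS : MeasurableSet S) {a b : ℝ}
    (hSpolar : polarCoord.symm ⁻¹' S ∩ polarCoord.target = Ioi 0 ×ˢ Ioo a b)
    {g : ℝ → ENNReal} (hg : Measurable g) :
    ∫⁻ p in S, g (p.1 ^ 2 + p.2 ^ 2) =
      ENNReal.ofReal (b - a) * ∫⁻ r in Ioi 0, ENNReal.ofReal r * g (r ^ 2) := by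
  have hpolar (p : ℝ × ℝ) :
      ENNReal.ofReal p.1 • S.indicator (fun q ↦ g (q.1 ^ 2 + q.2 ^ 2)) (polarCoord.symm p) =
        (polarCoord.symm ⁻¹' S).indicator (fun q ↦ ENNReal.ofReal q.1 * g (q.1 ^ 2)) p := by
    have : (p.1 * cos p.2) ^ 2 + (p.1 * sin p.2) ^ 2 = p.1 ^ 2 := by
      linear_combination p.1 ^ 2 * cos_sq_add_sin_sq p.2
    by_cases hp : polarCoord.symm p ∈ S
    · rw [indicator_of_mem hp, indicator_of_mem (mem_preimage.mpr hp), polarCoord_symm_apply, this,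
        smul_eq_mul]
    · rw [indicator_of_notMem hp, indicator_of_notMem (mt mem_preimage.mp hp), smul_zero]
  have hmeas : MeasurableSet (polarCoord.symm ⁻¹' S) :=
    continuous_polarCoord_symm.measurable hS
  rw [← lintegral_indicator hS, ← lintegral_comp_polarCoord_symm]
  simp_rw [hpolar]
  rw [lintegral_indicator hmeas, Measure.restrict_restrict hmeas, hSpolar, Measure.volume_eq_prod,
    ← Measure.prod_restrict, lintegral_prod _ (by fun_prop)]
  simp only [lintegral_const, Measure.restrict_apply MeasurableSet.univ, univ_inter,
    Real.volume_Ioo]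
  rw [lintegral_mul_const _ (by fun_prop), mul_comm]

noncomputable def bivariateNormalPDF (ρ : ℝ) (p : ℝ × ℝ) : ℝ :=
  (2 * π * √(1 - ρ ^ 2))⁻¹ * exp (-(p.1 ^ 2 - 2 * ρ * p.1 * p.2 + p.2 ^ 2) / (2 * (1 - ρ ^ 2)))

theorem bivariateNormalPDF_zero (p : ℝ × ℝ) :
    bivariateNormalPDF 0 p = (2 * π)⁻¹ * exp (-(p.1 ^ 2 + p.2 ^ 2) / 2) := by
  simp [bivariateNormalPDF]

theorem measurable_ofReal_bivariateNormalPDF (ρ : ℝ) :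
    Measurable fun p ↦ ENNReal.ofReal (bivariateNormalPDF ρ p) := by
  unfold bivariateNormalPDF
  fun_prop

/-- Sends independent standard normals `(X, Z)` to `(X, sin φ X + cos φ Z)`, a standard pair with
correlation `sin φ`. -/
noncomputable def correlatingMap (φ : ℝ) : ℝ × ℝ →ₗ[ℝ] ℝ × ℝ :=
  Matrix.toLin (Module.Basis.finTwoProd ℝ) (Module.Basis.finTwoProd ℝ) !![1, 0; sin φ, cos φ]

theorem correlatingMap_apply (φ : ℝ) (q : ℝ × ℝ) :
    correlatingMap φ q = (q.1, sin φ * q.1 + cos φ * q.2) := by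
  simp [correlatingMap, Matrix.toLin_finTwoProd_apply]

theorem det_correlatingMap (φ : ℝ) : LinearMap.det (correlatingMap φ) = cos φ := by
  simp [correlatingMap, LinearMap.det_toLin, Matrix.det_fin_two_of]

theorem correlatingMap_polarCoord_symm (φ : ℝ) (p : ℝ × ℝ) :
    correlatingMap φ (polarCoord.symm p) = (p.1 * cos p.2, p.1 * sin (p.2 + φ)) := by
  rw [correlatingMap_apply, polarCoord_symm_apply, sin_add]
  congr 1
  ring

theorem cos_mul_bivariateNormalPDF_correlatingMap {φ : ℝ} (hφ : 0 < cos φ) (q : ℝ × ℝ) :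
    cos φ * bivariateNormalPDF (sin φ) (correlatingMap φ q) = bivariateNormalPDF 0 q := by
  have hcos : 1 - sin φ ^ 2 = cos φ ^ 2 := by rw [← cos_sq_add_sin_sq φ]; ring
  have hquad : (q.1 ^ 2 - 2 * sin φ * q.1 * (sin φ * q.1 + cos φ * q.2)
      + (sin φ * q.1 + cos φ * q.2) ^ 2) / (2 * cos φ ^ 2) = (q.1 ^ 2 + q.2 ^ 2) / 2 := by
    field_simp
    linear_combination (-q.1 ^ 2) * cos_sq_add_sin_sq φ
  rw [bivariateNormalPDF_zero, bivariateNormalPDF, correlatingMap_apply, hcos, sqrt_sq hφ.le,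
    neg_div, hquad, neg_div]
  field_simp

theorem polarCoord_preimage_correlatingMap_quadrant {φ : ℝ} (hφ : φ ∈ Ioo (-(π / 2)) (π / 2)) :
    polarCoord.symm ⁻¹' (correlatingMap φ ⁻¹' {p | 0 < p.1 ∧ 0 < p.2}) ∩ polarCoord.target =
      Ioi 0 ×ˢ Ioo (-φ) (π / 2) := by
  obtain ⟨hφ₁, hφ₂⟩ := hφ
  ext ⟨r, θ⟩
  simp only [mem_inter_iff, mem_preimage, correlatingMap_polarCoord_symm, mem_ofPred_eq,
    polarCoord_target, mem_prod, mem_Ioi, mem_Ioo]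
  constructor
  · rintro ⟨⟨hcos, hsin⟩, hr, hθ₁, hθ₂⟩
    have hcos : 0 < cos θ := pos_of_mul_pos_right hcos hr.le
    have hsin : 0 < sin (θ + φ) := pos_of_mul_pos_right hsin hr.le
    have hθ_lt : θ < π / 2 := by
      by_contra! h
      linarith [cos_nonpos_of_pi_div_two_le_of_le h (by linarith)]
    have hθ_gt : -(π / 2) < θ := by
      by_contra! h
      have := cos_nonpos_of_pi_div_two_le_of_le (x := -θ) (by linarith) (by linarith)
      linarith [cos_neg θ]
    refine ⟨hr, ?_, hθ_lt⟩
    by_contra! h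
    linarith [sin_nonpos_of_nonpos_of_neg_pi_le (x := θ + φ) (by linarith) (by linarith)]
  · rintro ⟨hr, hθ₁, hθ₂⟩
    refine ⟨⟨mul_pos hr (cos_pos_of_mem_Ioo ⟨by linarith, hθ₂⟩),
      mul_pos hr (sin_pos_of_pos_of_lt_pi (by linarith) (by linarith))⟩, hr, ?_, ?_⟩ <;>
    linarith [pi_pos]

theorem setLIntegral_bivariateNormalPDF_zero {S : Set (ℝ × ℝ)} (hS : MeasurableSet S) {a b : ℝ}
    (hSpolar : polarCoord.symm ⁻¹' S ∩ polarCoord.target = Ioi 0 ×ˢ Ioo a b) :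
    ∫⁻ p in S, ENNReal.ofReal (bivariateNormalPDF 0 p) = ENNReal.ofReal ((b - a) / (2 * π)) := by
  simp_rw [bivariateNormalPDF_zero]
  rw [setLIntegral_radial_eq_of_polarCoord hS hSpolar
    (g := fun t ↦ ENNReal.ofReal ((2 * π)⁻¹ * exp (-t / 2))) (by fun_prop)]
  have hfactor (r : ℝ) : ENNReal.ofReal r * ENNReal.ofReal ((2 * π)⁻¹ * exp (-r ^ 2 / 2)) =
      ENNReal.ofReal (2 * π)⁻¹ * ENNReal.ofReal (r * exp (-r ^ 2 / 2)) := by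
    rw [← ENNReal.ofReal_mul' (by positivity), ← ENNReal.ofReal_mul (by positivity),
      mul_left_comm]
  simp_rw [hfactor]
  rw [lintegral_const_mul' _ _ ENNReal.ofReal_ne_top, lintegral_Ioi_mul_exp_neg_sq_div_two, mul_one,
    ← ENNReal.ofReal_mul' (by positivity), div_eq_mul_inv]

theorem sheppard_orthant (ρ : ℝ) (hρ : -1 < ρ) (hρ' : ρ < 1) :
    (volume.withDensity (fun p : ℝ × ℝ =>
        ENNReal.ofReal ((2 * Real.pi * Real.sqrt (1 - ρ ^ 2))⁻¹ *
          Real.exp (-(p.1 ^ 2 - 2 * ρ * p.1 * p.2 + p.2 ^ 2) / (2 * (1 - ρ ^ 2))))))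
      {p : ℝ × ℝ | 0 < p.1 ∧ 0 < p.2}
    = ENNReal.ofReal (1 / 4 + Real.arcsin ρ / (2 * Real.pi)) := by
  obtain ⟨φ, hφ, rfl⟩ : ∃ φ ∈ Ioo (-(π / 2)) (π / 2), sin φ = ρ :=
    ⟨arcsin ρ, ⟨neg_pi_div_two_lt_arcsin.mpr hρ, arcsin_lt_pi_div_two.mpr hρ'⟩,
      sin_arcsin hρ.le hρ'.le⟩
  have hcos : 0 < cos φ := cos_pos_of_mem_Ioo hφ
  have hQ : MeasurableSet {p : ℝ × ℝ | 0 < p.1 ∧ 0 < p.2} :=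
    (measurableSet_lt measurable_const measurable_fst).inter
      (measurableSet_lt measurable_const measurable_snd)
  have hQ' := (correlatingMap φ).continuous_of_finiteDimensional.measurable hQ
  rw [withDensity_apply _ hQ, arcsin_sin hφ.1.le hφ.2.le]
  calc ∫⁻ p in {p : ℝ × ℝ | 0 < p.1 ∧ 0 < p.2}, ENNReal.ofReal (bivariateNormalPDF (sin φ) p)
      = ENNReal.ofReal (cos φ) * ∫⁻ q in correlatingMap φ ⁻¹' {p | 0 < p.1 ∧ 0 < p.2},
          ENNReal.ofReal (bivariateNormalPDF (sin φ) (correlatingMap φ q)) := by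
        rw [setLIntegral_comp_linearMap volume (by rw [det_correlatingMap]; exact hcos.ne') hQ
          (measurable_ofReal_bivariateNormalPDF _), det_correlatingMap, ← mul_assoc,
          ← ENNReal.ofReal_mul hcos.le, abs_of_pos (inv_pos.mpr hcos), mul_inv_cancel₀ hcos.ne',
          ENNReal.ofReal_one, one_mul]
    _ = ∫⁻ q in correlatingMap φ ⁻¹' {p | 0 < p.1 ∧ 0 < p.2},
          ENNReal.ofReal (bivariateNormalPDF 0 q) := by
        rw [← lintegral_const_mul' _ _ ENNReal.ofReal_ne_top]
        simp_rw [← ENNReal.ofReal_mul hcos.le, cos_mul_bivariateNormalPDF_correlatingMap hcos]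
    _ = ENNReal.ofReal ((π / 2 - -φ) / (2 * π)) :=
        setLIntegral_bivariateNormalPDF_zero hQ' (polarCoord_preimage_correlatingMap_quadrant hφ)
    _ = ENNReal.ofReal (1 / 4 + φ / (2 * π)) := by
        congr 1
        field_simp
        ring
end
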